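/- arXiv:0907.3097 — 2 statements merged into one kernel-verified Lean document; each statement's English description precedes it below -/
import Mathlib

section
/- Let ℓ ∈ ℕ, let A ⊆ Q = [2]^ℓ, and suppose A internally spans Q. Let S be an (ℓ−2)-dimensional subcube of Q with |A ∖ S| = 1. Then S is internally spanned by A ∩ S. Moreover, if ℓ is even and A sequentially spans Q, then S is sequentially spanned by A ∩ S. -/
/-- Adjacency in the grid graph `[n]^d`: two vertices are adjacent iff they differ
by exactly 1 in a single coordinate. -/
def gridAdj (n d : ℕ) (x y : Fin d → Fin n) : Prop :=
  ∃ i, ((x i : ℕ) + 1 = (y i : ℕ) ∨ (y i : ℕ) + 1 = (x i : ℕ)) ∧ ∀ j, j ≠ i → x j = y j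

/-- The grid graph `[n]^d`. -/
def gridGraph (n d : ℕ) : SimpleGraph (Fin d → Fin n) where
  Adj := gridAdj n d
  symm := by
    constructor
    rintro x y ⟨i, h1, h2⟩
    exact ⟨i, h1.symm, fun j hj => (h2 j hj).symm⟩
  loopless := by
    constructor
    rintro x ⟨i, h1, -⟩
    omega

/-- Graph distance from a vertex to a set in the grid graph. -/
noncomputable def gridSetDist (n d : ℕ) (x : Fin d → Fin n) (S : Set (Fin d → Fin n)) : ℕ :=
  sInf (Set.image (fun y => (gridGraph n d).dist x y) S)

/-- One step of `r`-neighbour bootstrap percolation. -/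
def bootStep {V : Type*} (adj : V → V → Prop) (r : ℕ) (A : Set V) : Set V :=
  A ∪ {v | r ≤ {u | adj v u ∧ u ∈ A}.ncard}

/-- The closure `[A]` of a set under `r`-neighbour bootstrap percolation. -/
def bootClosure {V : Type*} (adj : V → V → Prop) (r : ℕ) (A : Set V) : Set V :=
  ⋃ t, (bootStep adj r)^[t] A

/-- The dimension of a cube in `[n]^d`: the sum over coordinates of
(number of values taken in that coordinate minus one). -/
noncomputable def cubeDim {n d : ℕ} (Q : Set (Fin d → Fin n)) : ℕ :=
  ∑ i : Fin d, ((Set.image (fun x => x i) Q).ncard - 1)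

/-- A cube in `[n]^d` is a (nonempty) product of integer intervals. -/
def IsCube {n d : ℕ} (Q : Set (Fin d → Fin n)) : Prop :=
  ∃ lo hi : Fin d → Fin n, (∀ i, lo i ≤ hi i) ∧
    Q = {x | ∀ i, lo i ≤ x i ∧ x i ≤ hi i}

/-- A hypercube in `[n]^d` is a cube all of whose sides have length 1 or 2,
i.e. a copy of some `[2]^m`. -/
def IsHypercube {n d : ℕ} (Q : Set (Fin d → Fin n)) : Prop :=
  ∃ lo hi : Fin d → Fin n, (∀ i, lo i ≤ hi i ∧ (hi i : ℕ) ≤ (lo i : ℕ) + 1) ∧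
    Q = {x | ∀ i, lo i ≤ x i ∧ x i ≤ hi i}

/-- `Q` is internally spanned by `A`: the bootstrap closure of `A ∩ Q` is `Q`. -/
def IntSpans (n d : ℕ) (A Q : Set (Fin d → Fin n)) : Prop :=
  bootClosure (gridAdj n d) 2 (A ∩ Q) = Q

/-- A set is constant on the coordinates in `J`. -/
def ConstOn {n d : ℕ} (J : Set (Fin d)) (C : Set (Fin d → Fin n)) : Prop :=
  ∀ i ∈ J, ∀ x ∈ C, ∀ y ∈ C, x i = y i

/-- `C` belongs to `Q⟨J⟩`: `C` is a maximal subcube of `Q` constant on the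
coordinates in `J`. -/
def MaxConstSubcube (n d : ℕ) (Q : Set (Fin d → Fin n)) (J : Set (Fin d))
    (C : Set (Fin d → Fin n)) : Prop :=
  IsCube C ∧ C ⊆ Q ∧ ConstOn J C ∧
    ∀ C', IsCube C' → C' ⊆ Q → ConstOn J C' → C ⊆ C' → C' = C

/-- `{j,k}` is a final pair for `A` in `Q`. -/
def FinalPair (n d : ℕ) (A Q : Set (Fin d → Fin n)) (j k : Fin d) : Prop :=
  IntSpans n d A Q ∧
    ∃ C, MaxConstSubcube n d Q {j, k} C ∧ IntSpans n d A C ∧ (A \ C).ncard = 1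

/-- `{i}` is a final element for `A` in `Q`. -/
def FinalElt (n d : ℕ) (A Q : Set (Fin d → Fin n)) (i : Fin d) : Prop :=
  IntSpans n d A Q ∧
    ∃ C, MaxConstSubcube n d Q {i} C ∧ IntSpans n d A C ∧ (A \ C).ncard = 1

/-- `A` sequentially spans the hypercube `Q` (of dimension `2t`):
`|A| = t+1` and `A` admits an ordering `(a 0, …, a t)` with
`dist (a (j+1), [{a 0,…,a j}]) = 2` for all `j < t`. -/
def SeqSpans (n d : ℕ) (A Q : Set (Fin d → Fin n)) : Prop :=
  ∃ t : ℕ, cubeDim Q = 2 * t ∧ A ⊆ Q ∧ A.ncard = t + 1 ∧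
    bootClosure (gridAdj n d) 2 A = Q ∧
    ∃ a : Fin (t + 1) → (Fin d → Fin n), Function.Injective a ∧ Set.range a = A ∧
      ∀ j : Fin t, gridSetDist n d (a j.succ)
        (bootClosure (gridAdj n d) 2 (a '' {i | (i : ℕ) ≤ (j : ℕ)})) = 2

/-- `{j,k}` is an ending for `A` (in the full cube): some `A' ⊆ A` sequentially
spans one of the maximal subcubes constant on `{j,k}`. -/
def EndingPair (n d : ℕ) (A : Set (Fin d → Fin n)) (j k : Fin d) : Prop :=
  ∃ A', A' ⊆ A ∧ ∃ C, MaxConstSubcube n d Set.univ {j, k} C ∧ SeqSpans n d A' C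

/-- `Δ(b,C)`: the set of directions in which the vertex `b` and the cube `C`
are both constant and differ. -/
def Delta {n d : ℕ} (b : Fin d → Fin n) (C : Set (Fin d → Fin n)) : Set (Fin d) :=
  {i | (∀ x ∈ C, ∀ y ∈ C, x i = y i) ∧ ∀ x ∈ C, x i ≠ b i}

/-- The probability of an event `E` for a random subset `A ~ Bin(V,p)`,
each element included independently with probability `p`. -/
noncomputable def binProb {V : Type*} [Fintype V] (p : ℝ) (E : Finset V → Prop) : ℝ :=
  ∑ A : Finset V,
    Set.indicator {B | E B} (fun B => p ^ B.card * (1 - p) ^ (Fintype.card V - B.card)) A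

/-- The expectation of `f` for a random subset `A ~ Bin(V,p)`. -/
noncomputable def binExp {V : Type*} [Fintype V] (p : ℝ) (f : Finset V → ℝ) : ℝ :=
  ∑ A : Finset V, f A * (p ^ A.card * (1 - p) ^ (Fintype.card V - A.card))

/-- `P(ℓ,p)`: the probability that `A ~ Bin([2]^ℓ,p)` internally spans `[2]^ℓ`. -/
noncomputable def Pprob (ℓ : ℕ) (p : ℝ) : ℝ :=
  binProb p (fun A : Finset (Fin ℓ → Fin 2) =>
    bootClosure (gridAdj 2 ℓ) 2 (↑A : Set (Fin ℓ → Fin 2)) = Set.univ)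

/-- `Q(2ℓ,p)`: the probability that `A ~ Bin([2]^{2ℓ},p)` sequentially
internally spans `[2]^{2ℓ}`. -/
noncomputable def Qprob (ℓ : ℕ) (p : ℝ) : ℝ :=
  binProb p (fun A : Finset (Fin (2 * ℓ) → Fin 2) =>
    SeqSpans 2 (2 * ℓ) (↑A : Set (Fin (2 * ℓ) → Fin 2)) Set.univ)

/-- `|𝒮(ℓ)|`: the number of `(ℓ+1)`-subsets of `[2]^{2ℓ}` which sequentially span it. -/
noncomputable def Scard (ℓ : ℕ) : ℕ :=
  {A : Set (Fin (2 * ℓ) → Fin 2) | SeqSpans 2 (2 * ℓ) A Set.univ}.ncard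

/-- The probability that `A ~ Bin([n]^d,p)` percolates in `r`-neighbour
bootstrap percolation. -/
noncomputable def percProb (n d r : ℕ) (p : ℝ) : ℝ :=
  binProb p (fun A : Finset (Fin d → Fin n) =>
    bootClosure (gridAdj n d) r (↑A : Set (Fin d → Fin n)) = Set.univ)

/-- The critical probability `p_c([n]^d, r)`. -/
noncomputable def pc (n d r : ℕ) : ℝ :=
  sInf {p : ℝ | 0 ≤ p ∧ p ≤ 1 ∧ 1 / 2 ≤ percProb n d r p}

/-- The series `x ↦ ∑_{k≥0} (-1)^k x^k / (2^{k²-k} k!)`, whose smallest positive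
root is `λ ≈ 1.166`. -/
noncomputable def lamSeries (x : ℝ) : ℝ :=
  ∑' k : ℕ, (-1 : ℝ) ^ k * x ^ k / (2 ^ (k ^ 2 - k) * (Nat.factorial k))


/-!
Write `S = {x | x j = c j, x k = c k}` and let `a` be the point of `A` outside `S`. A spanning
set lies in no facet, so `a` differs from `S` in both fixed coordinates and its projection `p`
onto `S` is the only point of `S` at distance 2 from `a`. The projection onto `S` maps closures
into closures and sends `A` into `(A ∩ S) ∪ {p}`, so `S` is spanned by `A ∩ S` once
`p ∈ [A ∩ S]`; and if it were not, adding `a` to the closed set `[A ∩ S]` would infect nothing.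

For sequential spanning, delete `a` from the ordering. Every later prefix closure contains `p`
(again the only point of `S` at distance 2 from `a`), so projecting a nearest point of the old
prefix closure gives a point of the new one that is no farther from the next vertex, which lies
in `S`: the distances 2 are preserved.
-/

section Bootstrap

variable {V : Type*} {adj : V → V → Prop} {r : ℕ}

def IsBootClosed (adj : V → V → Prop) (r : ℕ) (C : Set V) : Prop :=
  bootStep adj r C ⊆ C

lemma subset_bootStep (A : Set V) : A ⊆ bootStep adj r A :=
  Set.subset_union_left

lemma subset_bootClosure (A : Set V) : A ⊆ bootClosure adj r A :=
  Set.subset_iUnion (fun t => (bootStep adj r)^[t] A) 0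

lemma monotone_iterate_bootStep (A : Set V) :
    Monotone fun t => (bootStep adj r)^[t] A :=
  monotone_nat_of_le_succ fun t => by
    rw [Function.iterate_succ_apply']
    exact subset_bootStep _

variable [Finite V]

lemma bootStep_mono : Monotone (bootStep adj r) := by
  intro A B h v hv
  refine hv.imp (@h v) fun hv => hv.trans (Set.ncard_le_ncard ?_)
  exact fun u hu => ⟨hu.1, h hu.2⟩

lemma bootClosure_mono : Monotone (bootClosure adj r) := by
  intro A B h
  refine Set.iUnion_mono fun t => ?_
  exact (bootStep_mono.iterate t) h

lemma bootClosure_subset_of_isBootClosed {A C : Set V} (hAC : A ⊆ C)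
    (hC : IsBootClosed adj r C) : bootClosure adj r A ⊆ C := by
  refine Set.iUnion_subset fun t => ?_
  induction t with
  | zero => exact hAC
  | succ t ih =>
    rw [Function.iterate_succ_apply']
    exact (bootStep_mono ih).trans hC

lemma isBootClosed_bootClosure (A : Set V) : IsBootClosed adj r (bootClosure adj r A) := by
  obtain ⟨N, hN⟩ := WellFoundedGT.monotone_chain_condition
    ⟨_, monotone_iterate_bootStep (adj := adj) (r := r) A⟩
  have hstable : ∀ m, (bootStep adj r)^[m] A ⊆ (bootStep adj r)^[N] A := fun m =>
    (le_total m N).elim (fun h => monotone_iterate_bootStep A h) fun h => (hN m h).ge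
  have hcl : bootClosure adj r A = (bootStep adj r)^[N] A :=
    (Set.iUnion_subset hstable).antisymm (Set.subset_iUnion (fun t => (bootStep adj r)^[t] A) N)
  rw [IsBootClosed, hcl, ← Function.iterate_succ_apply' (bootStep adj r)]
  exact hstable _

lemma bootClosure_eq_self {C : Set V} (hC : IsBootClosed adj r C) : bootClosure adj r C = C :=
  (bootClosure_subset_of_isBootClosed subset_rfl hC).antisymm (subset_bootClosure C)

lemma image_bootClosure_subset {f : V → V}
    (hf : ∀ C, f '' bootStep adj r C ⊆ bootStep adj r (f '' C)) (X : Set V) :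
    f '' bootClosure adj r X ⊆ bootClosure adj r (f '' X) := by
  rw [bootClosure, Set.image_iUnion]
  refine Set.iUnion_mono fun t => ?_
  induction t with
  | zero => exact subset_rfl
  | succ t ih =>
    simp only [Function.iterate_succ_apply']
    exact (hf _).trans (bootStep_mono ih)

lemma mem_bootStep_two_iff {C : Set V} {v : V} :
    v ∈ bootStep adj 2 C ↔ v ∈ C ∨ ∃ u₁ ∈ C, ∃ u₂ ∈ C, u₁ ≠ u₂ ∧ adj v u₁ ∧ adj v u₂ := by
  rw [bootStep, Set.mem_union, Set.mem_ofPred_eq, Nat.succ_le_iff, Set.one_lt_ncard]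
  simp only [Set.mem_ofPred_eq]
  grind

lemma isBootClosed_two_iff {C : Set V} :
    IsBootClosed adj 2 C ↔
      ∀ v ∉ C, ∀ u₁ ∈ C, ∀ u₂ ∈ C, adj v u₁ → adj v u₂ → u₁ = u₂ := by
  simp only [IsBootClosed, Set.subset_def, mem_bootStep_two_iff]
  grind

lemma isBootClosed_singleton (a : V) : IsBootClosed adj 2 {a} :=
  isBootClosed_two_iff.2 fun _ _ _ h₁ _ h₂ _ _ => h₁.trans h₂.symm

end Bootstrap

section Cube

open Function

variable {ℓ : ℕ}

def flipAt (x : Fin ℓ → Fin 2) (i : Fin ℓ) : Fin ℓ → Fin 2 :=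
  update x i (x i + 1)

lemma flipAt_apply_of_ne {x : Fin ℓ → Fin 2} {i m : Fin ℓ} (h : m ≠ i) : flipAt x i m = x m :=
  update_of_ne h _ _

lemma fin2_ne_iff_add_one_eq {a b : Fin 2} : a ≠ b ↔ a + 1 = b := by
  revert a b
  decide

lemma flipAt_apply_self (x : Fin ℓ → Fin 2) (i : Fin ℓ) : flipAt x i i = x i + 1 :=
  update_self _ _ _

lemma flipAt_apply_self_ne (x : Fin ℓ → Fin 2) (i : Fin ℓ) : flipAt x i i ≠ x i :=
  fun h => fin2_ne_iff_add_one_eq.2 (flipAt_apply_self x i).symm h.symm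

lemma flipAt_injective (x : Fin ℓ → Fin 2) : Injective (flipAt x) := by
  intro i j h
  by_contra hij
  exact flipAt_apply_self_ne x i (by rw [h, flipAt_apply_of_ne hij])

lemma gridAdj_two_iff {x y : Fin ℓ → Fin 2} : gridAdj 2 ℓ x y ↔ ∃ i, y = flipAt x i := by
  have step : ∀ a b : Fin 2, ((a : ℕ) + 1 = b ∨ (b : ℕ) + 1 = a) ↔ b = a + 1 := by decide
  simp only [gridAdj, flipAt, eq_update_iff, step]
  exact exists_congr fun i => and_congr_right' <| forall₂_congr fun j _ => eq_comm

lemma hammingDist_flipAt (x : Fin ℓ → Fin 2) (i : Fin ℓ) : hammingDist x (flipAt x i) = 1 := by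
  rw [hammingDist, Finset.card_eq_one]
  refine ⟨i, Finset.ext fun m => ?_⟩
  rcases eq_or_ne m i with rfl | h
  · simpa using (flipAt_apply_self_ne x m).symm
  · simp [flipAt_apply_of_ne h, h]

lemma hammingDist_flipAt_lt {x y : Fin ℓ → Fin 2} {i : Fin ℓ} (h : x i ≠ y i) :
    hammingDist (flipAt x i) y < hammingDist x y := by
  have hflip : flipAt x i i = y i := by rw [flipAt_apply_self, fin2_ne_iff_add_one_eq.1 h]
  refine Finset.card_lt_card ⟨fun m => ?_, fun hsub => ?_⟩
  · rcases eq_or_ne m i with rfl | hm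
    · simp [hflip]
    · simp [flipAt_apply_of_ne hm]
  · simpa [hflip, h] using @hsub i

lemma hammingDist_le_two_of_gridAdj {v a u : Fin ℓ → Fin 2} (ha : gridAdj 2 ℓ v a)
    (hu : gridAdj 2 ℓ v u) : hammingDist a u ≤ 2 := by
  obtain ⟨i, rfl⟩ := gridAdj_two_iff.1 ha
  obtain ⟨j, rfl⟩ := gridAdj_two_iff.1 hu
  calc hammingDist (flipAt v i) (flipAt v j)
      ≤ hammingDist (flipAt v i) v + hammingDist v (flipAt v j) := hammingDist_triangle _ _ _
    _ = 2 := by rw [hammingDist_comm, hammingDist_flipAt, hammingDist_flipAt]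

lemma hammingDist_le_length {x y : Fin ℓ → Fin 2} (w : (gridGraph 2 ℓ).Walk x y) :
    hammingDist x y ≤ w.length := by
  induction w with
  | nil => simp
  | @cons x v y h w ih =>
    obtain ⟨i, rfl⟩ := gridAdj_two_iff.1 h
    calc hammingDist x y ≤ hammingDist x (flipAt x i) + hammingDist (flipAt x i) y :=
          hammingDist_triangle _ _ _
      _ ≤ _ := by rw [hammingDist_flipAt, SimpleGraph.Walk.length_cons]; omega

lemma exists_walk_length_le_hammingDist (x y : Fin ℓ → Fin 2) :
    ∃ w : (gridGraph 2 ℓ).Walk x y, w.length ≤ hammingDist x y := by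
  induction hn : hammingDist x y using Nat.strong_induction_on generalizing x with
  | _ n ih =>
    by_cases hxy : x = y
    · subst hxy
      exact ⟨.nil, Nat.zero_le _⟩
    obtain ⟨i, hi⟩ := ne_iff.1 hxy
    have hlt := hammingDist_flipAt_lt hi
    obtain ⟨w, hw⟩ := ih _ (hn ▸ hlt) (flipAt x i) rfl
    have hadj : (gridGraph 2 ℓ).Adj x (flipAt x i) := gridAdj_two_iff.2 ⟨i, rfl⟩
    exact ⟨.cons hadj w, by rw [SimpleGraph.Walk.length_cons]; omega⟩

lemma gridGraph_dist_eq_hammingDist (x y : Fin ℓ → Fin 2) :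
    (gridGraph 2 ℓ).dist x y = hammingDist x y := by
  obtain ⟨w, hw⟩ := exists_walk_length_le_hammingDist x y
  obtain ⟨p, hp⟩ := w.reachable.exists_walk_length_eq_dist
  exact ((SimpleGraph.dist_le w).trans hw).antisymm (hp ▸ hammingDist_le_length p)

lemma gridSetDist_eq_iff {x : Fin ℓ → Fin 2} {Y : Set (Fin ℓ → Fin 2)} {n : ℕ} (hn : n ≠ 0) :
    gridSetDist 2 ℓ x Y = n ↔ IsLeast (hammingDist x '' Y) n := by
  simp only [gridSetDist, gridGraph_dist_eq_hammingDist]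
  refine ⟨fun h => ?_, IsLeast.csInf_eq⟩
  have hne : (hammingDist x '' Y).Nonempty := by
    by_contra hY
    rw [Set.not_nonempty_iff_eq_empty.1 hY, Nat.sInf_empty] at h
    exact hn h.symm
  exact ⟨h ▸ Nat.sInf_mem hne, fun m hm => h ▸ Nat.sInf_le hm⟩

lemma isBootClosed_insert {T : Set (Fin ℓ → Fin 2)} {a : Fin ℓ → Fin 2}
    (hT : IsBootClosed (gridAdj 2 ℓ) 2 T) (ha : ∀ u ∈ T, 2 < hammingDist a u) :
    IsBootClosed (gridAdj 2 ℓ) 2 (insert a T) := by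
  rw [isBootClosed_two_iff] at hT ⊢
  have hfar : ∀ v, ∀ u ∈ T, gridAdj 2 ℓ v a → ¬ gridAdj 2 ℓ v u := fun v u hu hva hvu =>
    (ha u hu).not_ge (hammingDist_le_two_of_gridAdj hva hvu)
  intro v hv u₁ hu₁ u₂ hu₂ h₁ h₂
  rw [Set.mem_insert_iff, not_or] at hv
  rw [Set.mem_insert_iff] at hu₁ hu₂
  rcases hu₁ with rfl | hu₁ <;> rcases hu₂ with rfl | hu₂
  · rfl
  · exact (hfar v u₂ hu₂ h₁ h₂).elim
  · exact (hfar v u₁ hu₁ h₂ h₁).elim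
  · exact hT v hv.2 u₁ hu₁ u₂ hu₂ h₁ h₂

end Cube

section Face

variable {ℓ : ℕ} {J : Finset (Fin ℓ)} {c : Fin ℓ → Fin 2}

def face (J : Finset (Fin ℓ)) (c : Fin ℓ → Fin 2) : Set (Fin ℓ → Fin 2) :=
  {x | ∀ i ∈ J, x i = c i}

def projFace (J : Finset (Fin ℓ)) (c x : Fin ℓ → Fin 2) : Fin ℓ → Fin 2 :=
  fun i => if i ∈ J then c i else x i

lemma projFace_mem_face (x : Fin ℓ → Fin 2) : projFace J c x ∈ face J c :=
  fun _ hi => if_pos hi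

lemma projFace_eq_self {x : Fin ℓ → Fin 2} (hx : x ∈ face J c) : projFace J c x = x :=
  funext fun i => by by_cases hi : i ∈ J <;> simp [projFace, hi, hx i]

lemma range_projFace : Set.range (projFace J c) = face J c :=
  (Set.range_subset_iff.2 projFace_mem_face).antisymm fun x hx => ⟨x, projFace_eq_self hx⟩

lemma hammingDist_projFace_le (x y : Fin ℓ → Fin 2) :
    hammingDist (projFace J c x) (projFace J c y) ≤ hammingDist x y :=
  hammingDist_comp_le_hammingDist fun i b => if i ∈ J then c i else b

lemma projFace_flipAt_of_mem {v : Fin ℓ → Fin 2} {d : Fin ℓ} (hd : d ∈ J) :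
    projFace J c (flipAt v d) = projFace J c v :=
  funext fun i => by
    by_cases hi : i ∈ J
    · simp [projFace, hi]
    · simp [projFace, hi, flipAt_apply_of_ne (ne_of_mem_of_not_mem hd hi).symm]

lemma projFace_flipAt_of_notMem {v : Fin ℓ → Fin 2} {d : Fin ℓ} (hd : d ∉ J) :
    projFace J c (flipAt v d) = flipAt (projFace J c v) d :=
  funext fun i => by
    rcases eq_or_ne i d with rfl | hid
    · simp [projFace, hd, flipAt_apply_self]
    · simp [projFace, flipAt_apply_of_ne hid]

/-- A flip in a fixed direction is absorbed by the projection and one in a free direction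
commutes with it, so an infection is either collapsed or mapped to an infection. -/
lemma image_projFace_bootStep_subset (C : Set (Fin ℓ → Fin 2)) :
    projFace J c '' bootStep (gridAdj 2 ℓ) 2 C ⊆ bootStep (gridAdj 2 ℓ) 2 (projFace J c '' C) := by
  rintro _ ⟨v, hv, rfl⟩
  rw [mem_bootStep_two_iff] at hv ⊢
  rcases hv with hv | ⟨u₁, hu₁, u₂, hu₂, hne, h₁, h₂⟩
  · exact Or.inl ⟨v, hv, rfl⟩
  obtain ⟨d₁, rfl⟩ := gridAdj_two_iff.1 h₁
  obtain ⟨d₂, rfl⟩ := gridAdj_two_iff.1 h₂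
  by_cases hd₁ : d₁ ∈ J
  · exact Or.inl ⟨_, hu₁, projFace_flipAt_of_mem hd₁⟩
  by_cases hd₂ : d₂ ∈ J
  · exact Or.inl ⟨_, hu₂, projFace_flipAt_of_mem hd₂⟩
  refine Or.inr ⟨_, ⟨_, hu₁, rfl⟩, _, ⟨_, hu₂, rfl⟩, ?_, ?_, ?_⟩
  · rw [projFace_flipAt_of_notMem hd₁, projFace_flipAt_of_notMem hd₂]
    exact (flipAt_injective _).ne fun h => hne (h ▸ rfl)
  · exact gridAdj_two_iff.2 ⟨d₁, projFace_flipAt_of_notMem hd₁⟩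
  · exact gridAdj_two_iff.2 ⟨d₂, projFace_flipAt_of_notMem hd₂⟩

lemma image_projFace_bootClosure_subset (X : Set (Fin ℓ → Fin 2)) :
    projFace J c '' bootClosure (gridAdj 2 ℓ) 2 X ⊆
      bootClosure (gridAdj 2 ℓ) 2 (projFace J c '' X) :=
  image_bootClosure_subset image_projFace_bootStep_subset X

lemma isBootClosed_face : IsBootClosed (gridAdj 2 ℓ) 2 (face J c) := by
  rw [isBootClosed_two_iff]
  intro v hv u₁ hu₁ u₂ hu₂ h₁ h₂
  obtain ⟨i, hiJ, hvi⟩ : ∃ i ∈ J, v i ≠ c i := by simpa [face] using hv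
  have hflip : ∀ u ∈ face J c, gridAdj 2 ℓ v u → u = flipAt v i := by
    intro u hu h
    obtain ⟨d, rfl⟩ := gridAdj_two_iff.1 h
    by_contra hdi
    exact hvi ((flipAt_apply_of_ne fun h => hdi (by rw [h])).symm.trans (hu i hiJ))
  rw [hflip u₁ hu₁ h₁, hflip u₂ hu₂ h₂]

lemma card_le_hammingDist_of_mem_face {a u : Fin ℓ → Fin 2} (ha : ∀ i ∈ J, a i ≠ c i)
    (hu : u ∈ face J c) : J.card ≤ hammingDist a u :=
  Finset.card_le_card fun i hi => by simpa [hu i hi] using ha i hi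

lemma eq_projFace_of_hammingDist_le {a u : Fin ℓ → Fin 2} (ha : ∀ i ∈ J, a i ≠ c i)
    (hu : u ∈ face J c) (h : hammingDist a u ≤ J.card) : u = projFace J c a := by
  have hJ : J = ({i | a i ≠ u i} : Finset (Fin ℓ)) :=
    Finset.eq_of_subset_of_card_le (fun i hi => by simpa [hu i hi] using ha i hi) h
  funext i
  by_cases hi : i ∈ J
  · simp [projFace, hi, hu i hi]
  · simp only [projFace, if_neg hi]
    by_contra h
    exact hi (hJ ▸ Finset.mem_filter.2 ⟨Finset.mem_univ _, Ne.symm h⟩)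

lemma exists_eq_face_of_isCube {S : Set (Fin ℓ → Fin 2)} (hS : IsCube S) :
    ∃ (J : Finset (Fin ℓ)) (c : Fin ℓ → Fin 2), S = face J c := by
  obtain ⟨lo, hi, hle, rfl⟩ := hS
  have side : ∀ l h x : Fin 2, l ≤ h → (l ≤ x ∧ x ≤ h ↔ (l = h → x = l)) := by decide
  refine ⟨({i | lo i = hi i} : Finset (Fin ℓ)), lo, Set.ext fun x => forall_congr' fun i => ?_⟩
  simpa using side _ _ (x i) (hle i)

lemma image_eval_face (i : Fin ℓ) :
    (fun x => x i) '' face J c = if i ∈ J then {c i} else Set.univ := by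
  split_ifs with hi
  · refine Set.eq_singleton_iff_unique_mem.2 ⟨⟨c, fun _ _ => rfl, rfl⟩, ?_⟩
    rintro _ ⟨x, hx, rfl⟩
    exact hx i hi
  · refine Set.eq_univ_of_forall fun b => ⟨Function.update c i b, fun m hm => ?_, by simp⟩
    exact Function.update_of_ne (ne_of_mem_of_not_mem hm hi) _ _

lemma cubeDim_face_add_card : cubeDim (face J c) + J.card = ℓ := by
  have hside : ∀ i, ((fun x => x i) '' face J c).ncard - 1 = if i ∈ J then 0 else 1 := by
    intro i
    rw [image_eval_face]
    split_ifs <;> simp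
  simp only [cubeDim, hside, Finset.sum_ite, Finset.sum_const_zero, Finset.sum_const, smul_eq_mul, mul_one,
    zero_add, Finset.filter_not, Finset.filter_mem_eq_inter, Finset.univ_inter,
    Finset.card_univ_sdiff, Fintype.card_fin]
  exact Nat.sub_add_cancel (card_finset_fin_le J)

end Face

section Spanning

variable {ℓ : ℕ} {J : Finset (Fin ℓ)} {c : Fin ℓ → Fin 2} {A : Set (Fin ℓ → Fin 2)}
  {a : Fin ℓ → Fin 2}

lemma not_subset_face_of_bootClosure_eq_univ (hA : bootClosure (gridAdj 2 ℓ) 2 A = Set.univ)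
    (hJ : J.Nonempty) : ¬ A ⊆ face J c := by
  intro hAJ
  obtain ⟨i, hi⟩ := hJ
  have hflip : flipAt c i ∈ face J c :=
    bootClosure_subset_of_isBootClosed hAJ isBootClosed_face (hA ▸ Set.mem_univ _)
  exact flipAt_apply_self_ne c i (hflip i hi)

lemma ne_of_diff_face_eq_singleton (hA : bootClosure (gridAdj 2 ℓ) 2 A = Set.univ)
    (haA : A \ face J c = {a}) : ∀ i ∈ J, a i ≠ c i := by
  intro i hi
  obtain ⟨x, hxA, hx⟩ := Set.not_subset.1
    (not_subset_face_of_bootClosure_eq_univ (c := c) hA (Finset.singleton_nonempty i))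
  have hxi : x i ≠ c i := fun h => hx fun m hm => Finset.mem_singleton.1 hm ▸ h
  have hxa : x = a := haA.subset ⟨hxA, fun h => hxi (h i hi)⟩
  exact hxa ▸ hxi

/-- Otherwise every point of `[A ∩ face J c]` is at distance at least 3 from `a`, so adding `a`
infects nothing new and `A` could not span. -/
lemma projFace_mem_bootClosure_inter_face (hA : bootClosure (gridAdj 2 ℓ) 2 A = Set.univ)
    (hJ : J.card = 2) (haA : A \ face J c = {a}) :
    projFace J c a ∈ bootClosure (gridAdj 2 ℓ) 2 (A ∩ face J c) := by
  set T := bootClosure (gridAdj 2 ℓ) 2 (A ∩ face J c)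
  have hT : T ⊆ face J c :=
    bootClosure_subset_of_isBootClosed Set.inter_subset_right isBootClosed_face
  have ha := ne_of_diff_face_eq_singleton hA haA
  by_contra hp
  have hfar : ∀ u ∈ T, 2 < hammingDist a u := by
    intro u hu
    refine (hJ.symm.trans_le (card_le_hammingDist_of_mem_face ha (hT hu))).lt_of_ne fun h => hp ?_
    rwa [← eq_projFace_of_hammingDist_le ha (hT hu) (h.ge.trans_eq hJ.symm)]
  have hAT : A ⊆ insert a T := fun x hx => by
    by_cases hx' : x ∈ face J c
    · exact Or.inr (subset_bootClosure _ ⟨hx, hx'⟩)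
    · exact Or.inl (haA.subset ⟨hx, hx'⟩)
  have huniv := bootClosure_subset_of_isBootClosed hAT
    (isBootClosed_insert (isBootClosed_bootClosure _) hfar)
  rw [hA] at huniv
  obtain ⟨i, k, hik, rfl⟩ := Finset.card_eq_two.1 hJ
  rcases huniv (Set.mem_univ (flipAt a i)) with h | h
  · exact flipAt_apply_self_ne a i (congrFun h i)
  · exact ha k (by simp) ((flipAt_apply_of_ne hik.symm).symm.trans (hT h k (by simp)))

lemma bootClosure_inter_face_eq (hA : bootClosure (gridAdj 2 ℓ) 2 A = Set.univ)
    (hJ : J.card = 2) (haA : A \ face J c = {a}) :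
    bootClosure (gridAdj 2 ℓ) 2 (A ∩ face J c) = face J c := by
  refine (bootClosure_subset_of_isBootClosed Set.inter_subset_right isBootClosed_face).antisymm ?_
  have hproj : projFace J c '' A ⊆ bootClosure (gridAdj 2 ℓ) 2 (A ∩ face J c) := by
    rintro _ ⟨x, hx, rfl⟩
    by_cases hx' : x ∈ face J c
    · rw [projFace_eq_self hx']
      exact subset_bootClosure _ ⟨hx, hx'⟩
    · rw [haA.subset ⟨hx, hx'⟩]
      exact projFace_mem_bootClosure_inter_face hA hJ haA
  calc face J c = projFace J c '' bootClosure (gridAdj 2 ℓ) 2 A := by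
        rw [hA, Set.image_univ, range_projFace]
    _ ⊆ bootClosure (gridAdj 2 ℓ) 2 (projFace J c '' A) := image_projFace_bootClosure_subset A
    _ ⊆ _ := bootClosure_subset_of_isBootClosed hproj (isBootClosed_bootClosure _)

end Spanning

section Sequential

variable {ℓ : ℕ} {J : Finset (Fin ℓ)} {c : Fin ℓ → Fin 2}

lemma isLeast_hammingDist_of_projFace_subset {x : Fin ℓ → Fin 2} (hx : x ∈ face J c)
    {Z W : Set (Fin ℓ → Fin 2)} (hZW : Z ⊆ W)
    (hW : projFace J c '' W ⊆ bootClosure (gridAdj 2 ℓ) 2 Z) {n : ℕ}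
    (h : IsLeast (hammingDist x '' bootClosure (gridAdj 2 ℓ) 2 W) n) :
    IsLeast (hammingDist x '' bootClosure (gridAdj 2 ℓ) 2 Z) n := by
  obtain ⟨⟨z, hz, hzn⟩, hlow⟩ := h
  have hzZ : projFace J c z ∈ bootClosure (gridAdj 2 ℓ) 2 Z :=
    bootClosure_subset_of_isBootClosed hW (isBootClosed_bootClosure Z)
      (image_projFace_bootClosure_subset W ⟨z, hz, rfl⟩)
  refine ⟨⟨_, hzZ, ?_⟩, fun m hm => hlow (Set.image_mono (bootClosure_mono hZW) hm)⟩
  refine le_antisymm ?_ (hlow ⟨_, bootClosure_mono hZW hzZ, rfl⟩)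
  calc hammingDist x (projFace J c z) = hammingDist (projFace J c x) (projFace J c z) := by
        rw [projFace_eq_self hx]
    _ ≤ hammingDist x z := hammingDist_projFace_le x z
    _ = n := hzn

lemma projFace_mem_of_isLeast {a : Fin ℓ → Fin 2} (ha : ∀ i ∈ J, a i ≠ c i) (hJ : J.card = 2)
    {Y : Set (Fin ℓ → Fin 2)} (hY : Y ⊆ face J c) (h : IsLeast (hammingDist a '' Y) 2) :
    projFace J c a ∈ Y := by
  obtain ⟨y, hy, hay⟩ := h.1
  rwa [← eq_projFace_of_hammingDist_le ha (hY hy) (hay.le.trans_eq hJ.symm)]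

def IsSequentialOrder {t : ℕ} (a : Fin (t + 1) → Fin ℓ → Fin 2) : Prop :=
  ∀ n, n ≠ 0 → IsLeast (hammingDist (a n) '' bootClosure (gridAdj 2 ℓ) 2 (a '' Set.Iio n)) 2

lemma forall_gridSetDist_eq_two_iff {t : ℕ} (a : Fin (t + 1) → Fin ℓ → Fin 2) :
    (∀ j : Fin t, gridSetDist 2 ℓ (a j.succ)
        (bootClosure (gridAdj 2 ℓ) 2 (a '' {i | (i : ℕ) ≤ (j : ℕ)})) = 2) ↔
      IsSequentialOrder a := by
  have hIio : ∀ j : Fin t, {i : Fin (t + 1) | (i : ℕ) ≤ (j : ℕ)} = Set.Iio j.succ := fun j =>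
    Set.ext fun i => by simp [Fin.lt_def]
  simp only [IsSequentialOrder, Fin.forall_fin_succ, ne_eq, not_true_eq_false,
    IsEmpty.forall_iff, true_and, Fin.succ_ne_zero, not_false_eq_true, forall_const, hIio,
    gridSetDist_eq_iff two_ne_zero]

lemma Fin.image_succAbove_Iio {t : ℕ} (s : Fin (t + 1)) (n : Fin t) :
    s.succAbove '' Set.Iio n = Set.Iio (s.succAbove n) \ {s} := by
  ext m
  constructor
  · rintro ⟨k, hk, rfl⟩
    exact ⟨Fin.succAbove_lt_succAbove_iff.2 hk, Fin.succAbove_ne s k⟩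
  · rintro ⟨hm, hms⟩
    obtain ⟨k, rfl⟩ := Fin.exists_succAbove_eq hms
    exact ⟨k, Fin.succAbove_lt_succAbove_iff.1 hm, rfl⟩

section Removal

variable {t : ℕ} {a : Fin (t + 2) → Fin ℓ → Fin 2} {s : Fin (t + 2)}

lemma IsSequentialOrder.projFace_mem_bootClosure (ha : IsSequentialOrder a)
    (hs : ∀ i ∈ J, a s i ≠ c i) (hJ : J.card = 2) (hface : ∀ m ≠ s, a m ∈ face J c)
    {n : Fin (t + 1)} (hn : n ≠ 0) (hsn : s < s.succAbove n) :
    projFace J c (a s) ∈ bootClosure (gridAdj 2 ℓ) 2 (a '' (Set.Iio (s.succAbove n) \ {s})) := by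
  rcases eq_or_ne s 0 with rfl | hs0
  -- `a 0` has no predecessors; instead `a 1`, at distance 2 from `a 0`, is its projection
  · have hIio : Set.Iio (1 : Fin (t + 2)) = {0} := by
      ext m
      simp only [Set.mem_Iio, Set.mem_singleton_iff, Fin.lt_def, Fin.ext_iff, Fin.val_one,
        Fin.val_zero]
      omega
    have h1 := (ha 1 one_ne_zero).1
    rw [hIio, Set.image_singleton, bootClosure_eq_self (isBootClosed_singleton _),
      Set.image_singleton, Set.mem_singleton_iff] at h1
    have h1p : a 1 = projFace J c (a 0) := eq_projFace_of_hammingDist_le hs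
      (hface 1 one_ne_zero) (by rw [hammingDist_comm, ← h1, hJ])
    refine h1p ▸ subset_bootClosure _ ⟨1, ⟨?_, one_ne_zero⟩, rfl⟩
    rw [Fin.succAbove_zero, Set.mem_Iio, ← Fin.succ_zero_eq_one, Fin.succ_lt_succ_iff]
    exact Fin.pos_iff_ne_zero.2 hn
  · have hY : bootClosure (gridAdj 2 ℓ) 2 (a '' Set.Iio s) ⊆ face J c :=
      bootClosure_subset_of_isBootClosed (Set.image_subset_iff.2 fun m hm => hface m hm.ne)
        isBootClosed_face
    have hsub : Set.Iio s ⊆ Set.Iio (s.succAbove n) \ {s} := fun m hm =>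
      ⟨lt_trans hm hsn, ne_of_lt hm⟩
    refine bootClosure_mono (Set.image_mono hsub) ?_
    exact projFace_mem_of_isLeast hs hJ hY (ha s hs0)

lemma IsSequentialOrder.comp_succAbove (ha : IsSequentialOrder a)
    (hs : ∀ i ∈ J, a s i ≠ c i) (hJ : J.card = 2) (hface : ∀ m ≠ s, a m ∈ face J c) :
    IsSequentialOrder (a ∘ s.succAbove) := by
  intro n hn
  have hpos : s.succAbove 0 < s.succAbove n :=
    Fin.succAbove_lt_succAbove_iff.2 (Fin.pos_iff_ne_zero.2 hn)
  have hn' : s.succAbove n ≠ 0 := ((Fin.zero_le _).trans_lt hpos).ne'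
  rw [Function.comp_apply, Set.image_comp, Fin.image_succAbove_Iio]
  rcases (Fin.succAbove_ne s n).lt_or_gt with hlt | hgt
  · have hs' : s ∉ Set.Iio (s.succAbove n) := not_lt.2 hlt.le
    rw [Set.sdiff_singleton_eq_self hs']
    exact ha _ hn'
  refine isLeast_hammingDist_of_projFace_subset (hface _ (Fin.succAbove_ne s n))
    (Set.image_mono Set.sdiff_subset) ?_ (ha _ hn')
  rintro _ ⟨_, ⟨k, hk, rfl⟩, rfl⟩
  rcases eq_or_ne k s with rfl | hks
  · exact ha.projFace_mem_bootClosure hs hJ hface hn hgt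
  · rw [projFace_eq_self (hface k hks)]
    exact subset_bootClosure _ ⟨k, ⟨hk, hks⟩, rfl⟩

end Removal

end Sequential

section Main

variable {ℓ : ℕ} {J : Finset (Fin ℓ)} {c : Fin ℓ → Fin 2} {A : Set (Fin ℓ → Fin 2)}
  {b : Fin ℓ → Fin 2}

lemma cubeDim_univ : cubeDim (Set.univ : Set (Fin ℓ → Fin 2)) = ℓ := by
  simpa [face] using cubeDim_face_add_card (J := ∅) (c := 0)

lemma seqSpans_inter_face (hJ : J.card = 2) (hA : SeqSpans 2 ℓ A Set.univ)
    (hbA : A \ face J c = {b}) : SeqSpans 2 ℓ (A ∩ face J c) (face J c) := by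
  obtain ⟨t, hdim, -, -, hspan, a, hinj, rfl, hseq⟩ := hA
  rw [forall_gridSetDist_eq_two_iff] at hseq
  have hℓ := cubeDim_face_add_card (J := J) (c := c)
  rw [cubeDim_univ] at hdim
  obtain ⟨t, rfl⟩ : ∃ t', t = t' + 1 := Nat.exists_eq_add_one.2 (by omega)
  obtain ⟨s, rfl⟩ : b ∈ Set.range a := (hbA.symm.subset rfl).1
  have hs := ne_of_diff_face_eq_singleton hspan hbA
  have hface : ∀ m ≠ s, a m ∈ face J c := fun m hm =>
    by_contra fun h => hm (hinj (hbA.subset ⟨⟨m, rfl⟩, h⟩))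
  have hinj' := hinj.comp (Fin.succAbove_right_injective (p := s))
  have hrange : Set.range (a ∘ s.succAbove) = Set.range a ∩ face J c := by
    rw [Set.range_comp, Fin.range_succAbove]
    ext x
    constructor
    · rintro ⟨m, hm, rfl⟩
      exact ⟨⟨m, rfl⟩, hface m hm⟩
    · rintro ⟨⟨m, rfl⟩, hm⟩
      exact ⟨m, fun h => (hbA.symm.subset rfl).2 (h ▸ hm), rfl⟩
  refine ⟨t, by omega, Set.inter_subset_right, ?_, bootClosure_inter_face_eq hspan hJ hbA,
    a ∘ s.succAbove, hinj', hrange,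
    (forall_gridSetDist_eq_two_iff _).2 (hseq.comp_succAbove hs hJ hface)⟩
  rw [← hrange, Set.ncard_range_of_injective hinj', Nat.card_eq_fintype_card, Fintype.card_fin]

end Main

theorem spanned_subcube_codim_two_general {ℓ : ℕ} (A : Set (Fin ℓ → Fin 2))
    (hspan : bootClosure (gridAdj 2 ℓ) 2 A = Set.univ)
    (S : Set (Fin ℓ → Fin 2)) (hS : IsCube S) (hdim : cubeDim S + 2 = ℓ)
    (hone : (A \ S).ncard = 1) :
    IntSpans 2 ℓ A S ∧
      (SeqSpans 2 ℓ A Set.univ → SeqSpans 2 ℓ (A ∩ S) S) := by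
  obtain ⟨J, c, rfl⟩ := exists_eq_face_of_isCube hS
  have hJ : J.card = 2 := by
    have := cubeDim_face_add_card (J := J) (c := c)
    omega
  obtain ⟨b, hb⟩ := Set.ncard_eq_one.1 hone
  exact ⟨bootClosure_inter_face_eq hspan hJ hb, fun hseq => seqSpans_inter_face hJ hseq hb⟩

/-- If `A` spans `Q = [2]^ℓ` and `S` is an `(ℓ-2)`-dimensional
subcube with `|A ∖ S| = 1`, then `A ∩ S` spans `S`; moreover sequential spanning
is inherited. -/
theorem spanned_subcube_codim_two {ℓ : ℕ} (hℓ : 2 ≤ ℓ) (A : Set (Fin ℓ → Fin 2))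
    (hspan : bootClosure (gridAdj 2 ℓ) 2 A = Set.univ)
    (S : Set (Fin ℓ → Fin 2)) (hS : IsCube S) (hdim : cubeDim S + 2 = ℓ)
    (hone : (A \ S).ncard = 1) :
    IntSpans 2 ℓ A S ∧
      (SeqSpans 2 ℓ A Set.univ → SeqSpans 2 ℓ (A ∩ S) S) :=
  spanned_subcube_codim_two_general A hspan S hS hdim hone
end

section
/- Let Q be a subcube of [n]^d. If A ⊆ [n]^d internally spans Q, then |A ∩ Q| ≥ dim(Q)/2 + 1. In particular, if A internally spans a copy of [2]^{2ℓ} then |A ∩ Q| ≥ ℓ + 1, and if A internally spans a copy of [2]^{2ℓ+1} then |A ∩ Q| ≥ ℓ + 2. -/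
/-!
Cover the infected set by finitely many clusters, a cluster `P` costing the dimension of its
bounding box plus 2; singletons cover `A ∩ Q` at cost `2 |A ∩ Q|`. A vertex infected through two
neighbours either lies in the bounding box of the single cluster containing both, or glues their
two clusters into one whose bounding box is at most 2 larger, so infection never raises the cost.
Conversely, in a cover of the box `Q` by several clusters, connectivity of `Q` yields two adjacent
clusters, and merging them lowers the cost; hence every cover of `Q` costs at least `dim Q + 2`.
-/

section BoundingBox

variable {n d : ℕ}

noncomputable def coordMax (S : Set (Fin d → Fin n)) (i : Fin d) : ℕ :=
  sSup ((fun x => (x i : ℕ)) '' S)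

noncomputable def coordMin (S : Set (Fin d → Fin n)) (i : Fin d) : ℕ :=
  sInf ((fun x => (x i : ℕ)) '' S)

noncomputable def boundingBoxDim (S : Set (Fin d → Fin n)) : ℕ :=
  ∑ i, (coordMax S i - coordMin S i)

variable {S S₁ S₂ : Set (Fin d → Fin n)} {i : Fin d} {c : ℕ}

lemma coordMax_le_iff : coordMax S i ≤ c ↔ ∀ x ∈ S, (x i : ℕ) ≤ c := by
  rcases S.eq_empty_or_nonempty with rfl | hS
  · simp [coordMax]
  · rw [coordMax, csSup_le_iff (Set.toFinite _).bddAbove (hS.image _), Set.forall_mem_image]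

lemma le_coordMin_iff (hS : S.Nonempty) : c ≤ coordMin S i ↔ ∀ x ∈ S, c ≤ (x i : ℕ) := by
  rw [coordMin, le_csInf_iff (OrderBot.bddBelow _) (hS.image _), Set.forall_mem_image]

lemma le_coordMax {x : Fin d → Fin n} (hx : x ∈ S) (i : Fin d) : (x i : ℕ) ≤ coordMax S i :=
  coordMax_le_iff.1 le_rfl x hx

lemma coordMin_le {x : Fin d → Fin n} (hx : x ∈ S) (i : Fin d) : coordMin S i ≤ (x i : ℕ) :=
  (le_coordMin_iff ⟨x, hx⟩).1 le_rfl x hx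

lemma boundingBoxDim_singleton (v : Fin d → Fin n) : boundingBoxDim {v} = 0 :=
  Finset.sum_eq_zero fun i _ => by
    have : coordMax {v} i ≤ v i :=
      coordMax_le_iff.2 fun x hx => by rw [Set.mem_singleton_iff.1 hx]
    have : v i ≤ coordMin {v} i := (le_coordMin_iff (Set.singleton_nonempty v)).2 fun x hx => by
      rw [Set.mem_singleton_iff.1 hx]
    omega

lemma boundingBoxDim_union_le_of_adj {u w : Fin d → Fin n} (hu : u ∈ S₁) (hw : w ∈ S₂)
    (huw : gridAdj n d u w) :
    boundingBoxDim (S₁ ∪ S₂) ≤ boundingBoxDim S₁ + boundingBoxDim S₂ + 1 := by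
  obtain ⟨a, hua, hrest⟩ := huw
  have hcoord : ∀ i, coordMax (S₁ ∪ S₂) i - coordMin (S₁ ∪ S₂) i ≤
      (coordMax S₁ i - coordMin S₁ i) + (coordMax S₂ i - coordMin S₂ i) +
        if i = a then 1 else 0 := by
    intro i
    have hmax : coordMax (S₁ ∪ S₂) i ≤ max (coordMax S₁ i) (coordMax S₂ i) :=
      coordMax_le_iff.2 fun x hx => hx.elim (fun h => le_max_of_le_left (le_coordMax h i))
        (fun h => le_max_of_le_right (le_coordMax h i))
    have hmin : min (coordMin S₁ i) (coordMin S₂ i) ≤ coordMin (S₁ ∪ S₂) i :=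
      (le_coordMin_iff ⟨u, Or.inl hu⟩).2 fun x hx => hx.elim
        (fun h => min_le_of_left_le (coordMin_le h i))
        (fun h => min_le_of_right_le (coordMin_le h i))
    have := le_coordMax hu i; have := coordMin_le hu i
    have := le_coordMax hw i; have := coordMin_le hw i
    split_ifs with h
    · subst h; omega
    · have : (u i : ℕ) = w i := congrArg Fin.val (hrest i h)
      omega
  calc boundingBoxDim (S₁ ∪ S₂)
      ≤ ∑ i, ((coordMax S₁ i - coordMin S₁ i) + (coordMax S₂ i - coordMin S₂ i) +
          if i = a then 1 else 0) := Finset.sum_le_sum fun i _ => hcoord i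
    _ = boundingBoxDim S₁ + boundingBoxDim S₂ + 1 := by
      simp [boundingBoxDim, Finset.sum_add_distrib]

lemma min_le_and_le_max_of_adj_of_adj {v u w : Fin d → Fin n} (huw : u ≠ w) (hu : gridAdj n d v u)
    (hw : gridAdj n d v w) (i : Fin d) :
    min (u i : ℕ) (w i) ≤ v i ∧ (v i : ℕ) ≤ max (u i : ℕ) (w i) := by
  obtain ⟨a, hva, hua⟩ := hu
  obtain ⟨b, hvb, hwb⟩ := hw
  by_cases ha : i = a
  · by_cases hb : i = b
    · subst ha hb
      have : (u i : ℕ) ≠ w i := fun h => huw <| funext fun j => by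
        by_cases hj : j = i
        · exact hj ▸ Fin.ext h
        · rw [← hua j hj, hwb j hj]
      omega
    · rw [← hwb i hb]; omega
  · rw [← hua i ha]; omega

lemma boundingBoxDim_insert_le_of_adj {v u w : Fin d → Fin n} (hu : u ∈ S) (hw : w ∈ S)
    (huw : u ≠ w) (hvu : gridAdj n d v u) (hvw : gridAdj n d v w) :
    boundingBoxDim (insert v S) ≤ boundingBoxDim S :=
  Finset.sum_le_sum fun i _ => by
    have hv := min_le_and_le_max_of_adj_of_adj huw hvu hvw i
    have hmax : coordMax (insert v S) i ≤ coordMax S i := by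
      refine coordMax_le_iff.2 fun x hx => hx.elim (fun h => ?_) (fun h => le_coordMax h i)
      have := le_coordMax hu i; have := le_coordMax hw i
      subst h; omega
    have hmin : coordMin S i ≤ coordMin (insert v S) i := by
      refine (le_coordMin_iff ⟨v, Set.mem_insert v S⟩).2 fun x hx =>
        hx.elim (fun h => ?_) (fun h => coordMin_le h i)
      have := coordMin_le hu i; have := coordMin_le hw i
      subst h; omega
    omega

end BoundingBox

section Box

variable {n d : ℕ} {lo hi : Fin d → Fin n}

lemma setOf_forall_le_and_le_eq_Icc (lo hi : Fin d → Fin n) :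
    {x : Fin d → Fin n | ∀ i, lo i ≤ x i ∧ x i ≤ hi i} = Set.Icc lo hi := by
  ext x
  simp [Pi.le_def, forall_and]

lemma cubeDim_Icc (hle : lo ≤ hi) : cubeDim (Set.Icc lo hi) = ∑ i, ((hi i : ℕ) - lo i) := by
  refine Finset.sum_congr rfl fun i _ => ?_
  have hne : (Set.univ.pi fun j => Set.Icc (lo j) (hi j)).Nonempty :=
    ⟨lo, fun j _ => Set.left_mem_Icc.2 (hle j)⟩
  rw [← Set.pi_univ_Icc, Set.eval_image_univ_pi hne, Set.ncard_eq_toFinset_card',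
    Set.toFinset_Icc, Fin.card_Icc]
  omega

lemma boundingBoxDim_Icc (hle : lo ≤ hi) :
    boundingBoxDim (Set.Icc lo hi) = ∑ i, ((hi i : ℕ) - lo i) := by
  refine Finset.sum_congr rfl fun i _ => ?_
  have hmax : coordMax (Set.Icc lo hi) i = hi i :=
    le_antisymm (coordMax_le_iff.2 fun x hx => hx.2 i) (le_coordMax (Set.right_mem_Icc.2 hle) i)
  have hmin : coordMin (Set.Icc lo hi) i = lo i :=
    le_antisymm (coordMin_le (Set.left_mem_Icc.2 hle) i)
      ((le_coordMin_iff ⟨lo, Set.left_mem_Icc.2 hle⟩).2 fun x hx => hx.1 i)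
  rw [hmax, hmin]

lemma exists_adj_sum_dist_lt {x z : Fin d → Fin n} (hx : x ∈ Set.Icc lo hi)
    (hz : z ∈ Set.Icc lo hi) (hxz : x ≠ z) :
    ∃ y ∈ Set.Icc lo hi, gridAdj n d x y ∧
      ∑ i, Nat.dist (y i) (z i) < ∑ i, Nat.dist (x i) (z i) := by
  obtain ⟨i, hxzi⟩ := Function.ne_iff.1 hxz
  have hne : (x i : ℕ) ≠ z i := Fin.val_ne_of_ne hxzi
  have := (x i).isLt
  have := (z i).isLt
  obtain ⟨c, hstep, hbetween, hcloser⟩ : ∃ c : Fin n, ((x i : ℕ) + 1 = c ∨ (c : ℕ) + 1 = x i) ∧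
      (min (x i : ℕ) (z i) ≤ c ∧ (c : ℕ) ≤ max (x i : ℕ) (z i)) ∧
      Nat.dist c (z i) < Nat.dist (x i) (z i) := by
    rcases lt_or_gt_of_ne hne with h | h
    · exact ⟨⟨x i + 1, by omega⟩, by simp only [Nat.dist, true_or, true_and]; omega⟩
    · exact ⟨⟨x i - 1, by omega⟩, by simp only [Nat.dist]; omega⟩
  have hxlo := hx.1 i; have hxhi := hx.2 i; have hzlo := hz.1 i; have hzhi := hz.2 i
  rw [Fin.le_def] at hxlo hxhi hzlo hzhi
  refine ⟨Function.update x i c,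
    ⟨le_update_iff.2 ⟨Fin.le_def.2 (by omega), fun j _ => hx.1 j⟩,
      update_le_iff.2 ⟨Fin.le_def.2 (by omega), fun j _ => hx.2 j⟩⟩,
    ⟨i, by simpa using hstep, fun j hj => (Function.update_of_ne hj c x).symm⟩, ?_⟩
  refine Finset.sum_lt_sum (fun j _ => ?_) ⟨i, Finset.mem_univ i, by simpa using hcloser⟩
  rcases eq_or_ne j i with rfl | hj
  · simpa using hcloser.le
  · rw [Function.update_of_ne hj]

lemma exists_adj_mem_diff {U : Set (Fin d → Fin n)} (hU : U ⊆ Set.Icc lo hi)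
    {x z : Fin d → Fin n} (hx : x ∈ U) (hz : z ∈ Set.Icc lo hi \ U) :
    ∃ u ∈ U, ∃ y ∈ Set.Icc lo hi \ U, gridAdj n d u y := by
  induction hk : ∑ i, Nat.dist (x i) (z i) using Nat.strong_induction_on generalizing x with
  | _ k ih =>
  obtain ⟨y, hy, hxy, hlt⟩ := exists_adj_sum_dist_lt (hU hx) hz.1 (ne_of_mem_of_not_mem hx hz.2)
  by_cases hyU : y ∈ U
  · exact ih _ (hk ▸ hlt) hyU rfl
  · exact ⟨x, hx, y, ⟨hy, hyU⟩, hxy⟩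

end Box

section MergeParts

variable {α : Type*} [DecidableEq (Set α)]

def mergeParts (PP T : Finset (Set α)) (X : Set α) : Finset (Set α) :=
  insert (⋃₀ ↑T ∪ X) (PP \ T)

variable {PP T : Finset (Set α)}

lemma sUnion_mergeParts (hT : T ⊆ PP) (X : Set α) :
    ⋃₀ (↑(mergeParts PP T X) : Set (Set α)) = ⋃₀ ↑PP ∪ X := by
  have hsplit : ⋃₀ (↑PP : Set (Set α)) = ⋃₀ ↑T ∪ ⋃₀ ↑(PP \ T) := by
    rw [← Set.sUnion_union, Finset.coe_sdiff, Set.union_sdiff_cancel (Finset.coe_subset.2 hT)]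
  rw [mergeParts, Finset.coe_insert, Set.sUnion_insert, hsplit, Set.union_right_comm]

lemma sum_mergeParts_add_sum_le (hT : T ⊆ PP) (X : Set α) (f : Set α → ℕ) :
    ∑ P ∈ mergeParts PP T X, f P + ∑ P ∈ T, f P ≤ ∑ P ∈ PP, f P + f (⋃₀ ↑T ∪ X) := by
  have hsplit := Finset.sum_sdiff hT (f := f)
  have hinsert : ∑ P ∈ mergeParts PP T X, f P ≤ f (⋃₀ ↑T ∪ X) + ∑ P ∈ PP \ T, f P := by
    by_cases hmem : ⋃₀ ↑T ∪ X ∈ PP \ T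
    · rw [mergeParts, Finset.insert_eq_of_mem hmem]
      omega
    · rw [mergeParts, Finset.sum_insert hmem]
  omega

lemma card_mergeParts_add_card_le (hT : T ⊆ PP) (X : Set α) :
    (mergeParts PP T X).card + T.card ≤ PP.card + 1 := by
  have := Finset.card_insert_le (⋃₀ ↑T ∪ X) (PP \ T)
  have := Finset.card_sdiff_add_card_eq_card hT
  rw [mergeParts]
  omega

lemma nonempty_of_mem_mergeParts (hPP : ∀ P ∈ PP, P.Nonempty) (hT : T ⊆ PP) (hTne : T.Nonempty)
    {X : Set α} : ∀ P ∈ mergeParts PP T X, P.Nonempty := by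
  intro P hP
  rcases Finset.mem_insert.1 hP with rfl | hP
  · obtain ⟨Q, hQ⟩ := hTne
    exact (hPP Q (hT hQ)).mono (Set.subset_union_of_subset_left (Set.subset_sUnion_of_mem hQ) _)
  · exact hPP P (Finset.mem_sdiff.1 hP).1

end MergeParts

section Cover

open scoped Classical

variable {n d : ℕ} {S : Set (Fin d → Fin n)} {m : ℕ}

def HasCoverOfCost (S : Set (Fin d → Fin n)) (m : ℕ) : Prop :=
  ∃ PP : Finset (Set (Fin d → Fin n)), (∀ P ∈ PP, P.Nonempty) ∧
    ⋃₀ (↑PP : Set (Set (Fin d → Fin n))) = S ∧ ∑ P ∈ PP, (boundingBoxDim P + 2) ≤ m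

lemma hasCoverOfCost_two_mul_ncard (S : Set (Fin d → Fin n)) :
    HasCoverOfCost S (2 * S.ncard) := by
  refine ⟨S.toFinset.image ({·}), by simp, by ext; simp, ?_⟩
  rw [Finset.sum_image fun _ _ _ _ h => Set.singleton_injective h, Set.ncard_eq_toFinset_card']
  simp [boundingBoxDim_singleton, mul_comm]

lemma hasCoverOfCost_mergeParts {PP T : Finset (Set (Fin d → Fin n))}
    (hPP : ∀ P ∈ PP, P.Nonempty) (hT : T ⊆ PP) (hTne : T.Nonempty) (X : Set (Fin d → Fin n))
    (hm : ∑ P ∈ PP, (boundingBoxDim P + 2) + (boundingBoxDim (⋃₀ ↑T ∪ X) + 2) ≤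
      m + ∑ P ∈ T, (boundingBoxDim P + 2)) :
    HasCoverOfCost (⋃₀ ↑PP ∪ X) m :=
  ⟨mergeParts PP T X, nonempty_of_mem_mergeParts hPP hT hTne, sUnion_mergeParts hT X, by
    have := sum_mergeParts_add_sum_le hT X (boundingBoxDim · + 2)
    omega⟩

lemma HasCoverOfCost.insert_of_adj {v u w : Fin d → Fin n} (h : HasCoverOfCost S m)
    (hu : u ∈ S) (hw : w ∈ S) (huw : u ≠ w) (hvu : gridAdj n d v u) (hvw : gridAdj n d v w) :
    HasCoverOfCost (insert v S) m := by
  obtain ⟨PP, hPP, rfl, hm⟩ := h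
  obtain ⟨Pu, hPu, huP⟩ := Set.mem_sUnion.1 hu
  obtain ⟨Pw, hPw, hwP⟩ := Set.mem_sUnion.1 hw
  rw [Set.insert_eq, Set.union_comm]
  by_cases hsame : Pu = Pw
  · subst hsame
    refine hasCoverOfCost_mergeParts hPP (Finset.singleton_subset_iff.2 hPu)
      (Finset.singleton_nonempty _) {v} ?_
    have := boundingBoxDim_insert_le_of_adj huP hwP huw hvu hvw
    simp only [Finset.coe_singleton, Set.sUnion_singleton, Set.union_singleton,
      Finset.sum_singleton]
    omega
  · refine hasCoverOfCost_mergeParts hPP (Finset.insert_subset hPu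
      (Finset.singleton_subset_iff.2 hPw)) (Finset.insert_nonempty _ _) {v} ?_
    have h1 := boundingBoxDim_union_le_of_adj (Set.mem_singleton v) huP hvu
    have h2 :=
      boundingBoxDim_union_le_of_adj (Set.mem_union_left Pu (Set.mem_singleton v)) hwP hvw
    have hunion : Pu ∪ Pw ∪ {v} = {v} ∪ Pu ∪ Pw := by
      rw [Set.union_comm _ {v}, Set.union_assoc]
    rw [boundingBoxDim_singleton] at h1
    rw [Finset.coe_pair, Set.sUnion_pair, Finset.sum_pair hsame, hunion]
    omega

lemma HasCoverOfCost.bootStep (h : HasCoverOfCost S m) :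
    HasCoverOfCost (_root_.bootStep (gridAdj n d) 2 S) m := by
  set F := {v | 2 ≤ {u | gridAdj n d v u ∧ u ∈ S}.ncard}
  refine Set.Finite.induction_on_subset (motive := fun t _ => HasCoverOfCost (S ∪ t) m) F
    (Set.toFinite F) (by rwa [Set.union_empty]) ?_
  intro v t hvF _ _ ht
  obtain ⟨u, hu, w, hw, huw⟩ := (Set.one_lt_ncard (Set.toFinite _)).1 hvF
  rw [Set.union_insert]
  exact ht.insert_of_adj (Or.inl hu.2) (Or.inl hw.2) huw hu.1 hw.1

lemma HasCoverOfCost.iterate_bootStep (h : HasCoverOfCost S m) (t : ℕ) :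
    HasCoverOfCost ((_root_.bootStep (gridAdj n d) 2)^[t] S) m := by
  induction t with
  | zero => exact h
  | succ t ih => rw [Function.iterate_succ_apply']; exact ih.bootStep

lemma HasCoverOfCost.boundingBoxDim_Icc_add_two_le {lo hi : Fin d → Fin n} (hle : lo ≤ hi)
    (h : HasCoverOfCost (Set.Icc lo hi) m) : boundingBoxDim (Set.Icc lo hi) + 2 ≤ m := by
  obtain ⟨PP, hPP, hU, hm⟩ := h
  induction hk : PP.card using Nat.strong_induction_on generalizing PP m with
  | _ k ih =>
  by_cases hall : ∀ P ∈ PP, P = Set.Icc lo hi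
  · obtain ⟨P, hP, -⟩ := Set.mem_sUnion.1 (hU ▸ Set.left_mem_Icc.2 hle)
    have := Finset.single_le_sum (f := (boundingBoxDim · + 2)) (fun _ _ => Nat.zero_le _) hP
    rw [hall P hP] at this
    omega
  push Not at hall
  obtain ⟨Pa, hPa, hPa_ne⟩ := hall
  have hPa_sub : Pa ⊆ Set.Icc lo hi := hU ▸ Set.subset_sUnion_of_mem hPa
  obtain ⟨x, hx⟩ := hPP Pa hPa
  obtain ⟨z, hz⟩ := Set.nonempty_of_ssubset (hPa_sub.ssubset_of_ne hPa_ne)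
  obtain ⟨u, hu, y, ⟨hy, hyPa⟩, huy⟩ := exists_adj_mem_diff hPa_sub hx hz
  obtain ⟨Pb, hPb, hyPb⟩ :=
    Set.mem_sUnion.1 (hU ▸ hy : y ∈ ⋃₀ (↑PP : Set (Set (Fin d → Fin n))))
  have hab : Pa ≠ Pb := fun h => hyPa (h ▸ hyPb)
  have hT : {Pa, Pb} ⊆ PP := Finset.insert_subset hPa (Finset.singleton_subset_iff.2 hPb)
  have hcard := card_mergeParts_add_card_le hT ∅
  have hsum := sum_mergeParts_add_sum_le hT ∅ (boundingBoxDim · + 2)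
  have hmerge := boundingBoxDim_union_le_of_adj hu hyPb huy
  rw [Finset.card_pair hab] at hcard
  rw [Finset.sum_pair hab, Finset.coe_pair, Set.sUnion_pair, Set.union_empty] at hsum
  have := ih _ (by omega) _
    (nonempty_of_mem_mergeParts (X := ∅) hPP hT (Finset.insert_nonempty _ _))
    (by rw [sUnion_mergeParts hT, hU, Set.union_empty]) le_rfl rfl
  omega

end Cover

lemma exists_iterate_bootStep_eq_bootClosure {V : Type*} [Finite V] (adj : V → V → Prop)
    (r : ℕ) (A : Set V) : ∃ t, (bootStep adj r)^[t] A = bootClosure adj r A := by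
  have hmono : Monotone fun t => (bootStep adj r)^[t] A :=
    monotone_nat_of_le_succ fun t => by
      rw [Function.iterate_succ_apply']
      exact Set.subset_union_left
  obtain ⟨t, ht⟩ := wellFoundedGT_iff_monotone_chain_condition.1 inferInstance ⟨_, hmono⟩
  refine ⟨t, (Set.subset_iUnion (fun s => (bootStep adj r)^[s] A) t).antisymm
    (Set.iUnion_subset fun s => ?_)⟩
  rcases le_total s t with hst | hts
  · exact hmono hst
  · exact (ht s hts).symm.subset

lemma cubeDim_add_two_le_of_intSpans {n d : ℕ} {Q A : Set (Fin d → Fin n)} (hQ : IsCube Q)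
    (h : IntSpans n d A Q) : cubeDim Q + 2 ≤ 2 * (A ∩ Q).ncard := by
  obtain ⟨lo, hi, hle, rfl⟩ := hQ
  rw [IntSpans, setOf_forall_le_and_le_eq_Icc] at h
  rw [setOf_forall_le_and_le_eq_Icc, cubeDim_Icc hle, ← boundingBoxDim_Icc hle]
  obtain ⟨t, ht⟩ := exists_iterate_bootStep_eq_bootClosure (gridAdj n d) 2 (A ∩ Set.Icc lo hi)
  have hcover := (hasCoverOfCost_two_mul_ncard (A ∩ Set.Icc lo hi)).iterate_bootStep t
  rw [ht, h] at hcover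
  exact hcover.boundingBoxDim_Icc_add_two_le hle

/-- A spanning set of a cube `Q` has at least `dim(Q)/2 + 1`
elements; in particular `ℓ+1` for `[2]^{2ℓ}` and `ℓ+2` for `[2]^{2ℓ+1}`. -/
theorem min_spanning_size {n d : ℕ} (Q : Set (Fin d → Fin n)) (hQ : IsCube Q)
    (A : Set (Fin d → Fin n)) (hspan : IntSpans n d A Q) :
    cubeDim Q + 2 ≤ 2 * (A ∩ Q).ncard ∧
    (∀ ℓ : ℕ, IsHypercube Q → cubeDim Q = 2 * ℓ → ℓ + 1 ≤ (A ∩ Q).ncard) ∧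
    (∀ ℓ : ℕ, IsHypercube Q → cubeDim Q = 2 * ℓ + 1 → ℓ + 2 ≤ (A ∩ Q).ncard) := by
  have h := cubeDim_add_two_le_of_intSpans hQ hspan
  exact ⟨h, fun ℓ _ hℓ => by omega, fun ℓ _ hℓ => by omega⟩
end
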